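/- The potential V has exactly one zero x₀ in (0,∞); its derivative V' has exactly one zero x₁ in (0,∞); its second derivative V'' has exactly two zeros x_{2,1} < x_{2,2} in (0,∞); and these satisfy the ordering 0 < x_{2,1} < x₀ < x₁ < x_{2,2}. Moreover the sign pattern holds: V ≤ 0 on [0,x₀] and V ≥ 0 on [x₀,∞); V' ≥ 0 on [0,x₁] and V' ≤ 0 on [x₁,∞); V'' ≥ 0 on [0,x_{2,1}], V'' ≤ 0 on [x_{2,1},x_{2,2}], and V'' ≥ 0 on [x_{2,2},∞). -/

import Mathlib

/-!
Write `y = α⁻¹ x`. Since `α'(y) = (cosh y + 1) / 3 = 1 / Q(y)`, differentiating in `x` is `Q̃ · d/dy`,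
so the soliton identities `Q' = -Q H`, `H' = Q / 3`, `H² = 1 - 2Q/3` become `Q̃' = -Q̃² H̃` and
`H̃' = Q̃² / 3`. This gives `V' = 2 Q̃³ H̃ (3Q̃ - 2)` and `V'' = (2/3) Q̃⁴ (27Q̃² - 50Q̃ + 18)`.
On `[0, ∞)`, `Q̃` decreases strictly from `3/2` to `0` and `H̃ ≥ 0` (with `H̃ > 0` off the origin), so
the zeros and signs of `V`, `V'`, `V''` are read off from the levels `Q̃ = 1`, `2/3`,
`(25 ± √139) / 27`, taken in reverse order in `x`.
-/

open Real MeasureTheory Filter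

noncomputable def Qs (x : ℝ) : ℝ := (3/2) * (1 / Real.cosh (x/2))^2
noncomputable def Hs (x : ℝ) : ℝ := Real.tanh (x/2)
noncomputable def alphaFn (x : ℝ) : ℝ := (1/3) * (Real.sinh x + x)
noncomputable def alphaInv : ℝ → ℝ := Function.invFun alphaFn
noncomputable def Qt (x : ℝ) : ℝ := Qs (alphaInv x)
noncomputable def Ht (x : ℝ) : ℝ := Hs (alphaInv x)
noncomputable def Vpot (x : ℝ) : ℝ := 2 * (Qt x)^2 * (1 - Qt x)

open Set

theorem cosh_add_one_eq_two_mul_cosh_half_sq (y : ℝ) : cosh y + 1 = 2 * cosh (y / 2) ^ 2 := by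
  nth_rewrite 1 [← mul_div_cancel₀ y two_ne_zero]
  rw [cosh_two_mul, sinh_sq]
  ring

theorem Qs_eq (y : ℝ) : Qs y = 3 / (cosh y + 1) := by
  rw [Qs, cosh_add_one_eq_two_mul_cosh_half_sq]
  field_simp

theorem Qs_pos (y : ℝ) : 0 < Qs y := by rw [Qs_eq]; positivity

theorem Hs_eq (y : ℝ) : Hs y = sinh y / (cosh y + 1) := by
  rw [Hs, tanh_eq_sinh_div_cosh, cosh_add_one_eq_two_mul_cosh_half_sq]
  nth_rewrite 3 [← mul_div_cancel₀ y two_ne_zero]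
  rw [sinh_two_mul]
  field_simp

theorem Hs_sq (y : ℝ) : Hs y ^ 2 = 1 - 2 / 3 * Qs y := by
  rw [Hs_eq, Qs_eq, div_pow, sinh_sq]
  field_simp
  ring

theorem hasDerivAt_Qs (y : ℝ) : HasDerivAt Qs (-Qs y * Hs y) y := by
  rw [Qs_eq, Hs_eq, funext Qs_eq]
  refine ((hasDerivAt_const y 3).div ((hasDerivAt_cosh y).add_const 1)
    (by positivity)).congr_deriv ?_
  field_simp
  ring

theorem hasDerivAt_Hs (y : ℝ) : HasDerivAt Hs (Qs y / 3) y := by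
  rw [Qs_eq, funext Hs_eq]
  refine ((hasDerivAt_sinh y).div ((hasDerivAt_cosh y).add_const 1)
    (by positivity)).congr_deriv ?_
  field_simp
  linear_combination cosh_sq y

theorem hasDerivAt_alphaFn (y : ℝ) : HasDerivAt alphaFn (Qs y)⁻¹ y := by
  refine (((hasDerivAt_sinh y).add (hasDerivAt_id y)).const_mul (1 / 3)).congr_deriv ?_
  rw [Qs_eq, inv_div]
  ring

theorem alphaFn_strictMono : StrictMono alphaFn := fun a b hab => by
  have := sinh_strictMono hab
  simp only [alphaFn]
  linarith

theorem alphaFn_surjective : Function.Surjective alphaFn :=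
  (continuous_const.mul (continuous_sinh.add continuous_id)).surjective
    ((sinhOrderIso.tendsto_atTop.atTop_add_atTop tendsto_id).const_mul_atTop (by norm_num))
    ((sinhOrderIso.tendsto_atBot.atBot_add_atBot tendsto_id).const_mul_atBot (by norm_num))

theorem alphaFn_zero : alphaFn 0 = 0 := by simp [alphaFn]

theorem alphaFn_alphaInv (x : ℝ) : alphaFn (alphaInv x) = x :=
  Function.rightInverse_invFun alphaFn_surjective x

theorem alphaInv_alphaFn (y : ℝ) : alphaInv (alphaFn y) = y :=
  Function.leftInverse_invFun alphaFn_strictMono.injective y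

theorem alphaInv_strictMono : StrictMono alphaInv := fun a b hab => by
  rwa [← alphaFn_strictMono.lt_iff_lt, alphaFn_alphaInv, alphaFn_alphaInv]

theorem alphaInv_zero : alphaInv 0 = 0 := by
  simpa [alphaFn_zero] using alphaInv_alphaFn 0

theorem continuous_alphaInv : Continuous alphaInv :=
  alphaInv_strictMono.monotone.continuous_of_surjective
    fun y => ⟨alphaFn y, alphaInv_alphaFn y⟩

theorem hasDerivAt_alphaInv (x : ℝ) : HasDerivAt alphaInv (Qt x) x := by
  have h := HasDerivAt.of_local_left_inverse continuous_alphaInv.continuousAt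
    (hasDerivAt_alphaFn (alphaInv x)) (inv_ne_zero (Qs_pos _).ne')
    (.of_forall alphaFn_alphaInv)
  rwa [inv_inv] at h

theorem Qt_pos (x : ℝ) : 0 < Qt x := Qs_pos _

theorem Ht_sq (x : ℝ) : Ht x ^ 2 = 1 - 2 / 3 * Qt x := Hs_sq _

theorem Ht_nonneg {x : ℝ} (hx : 0 ≤ x) : 0 ≤ Ht x := by
  have : 0 ≤ alphaInv x := alphaInv_zero ▸ alphaInv_strictMono.monotone hx
  rw [Ht, Hs_eq]
  exact div_nonneg (sinh_nonneg_iff.2 this) (by positivity)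

theorem Ht_pos {x : ℝ} (hx : 0 < x) : 0 < Ht x := by
  have : 0 < alphaInv x := alphaInv_zero ▸ alphaInv_strictMono hx
  rw [Ht, Hs_eq]
  exact div_pos (sinh_pos_iff.2 this) (by positivity)

theorem hasDerivAt_Qt (x : ℝ) : HasDerivAt Qt (-Qt x ^ 2 * Ht x) x := by
  refine ((hasDerivAt_Qs _).comp x (hasDerivAt_alphaInv x)).congr_deriv ?_
  simp only [Qt, Ht]
  ring

theorem hasDerivAt_Ht (x : ℝ) : HasDerivAt Ht (Qt x ^ 2 / 3) x := by
  refine ((hasDerivAt_Hs _).comp x (hasDerivAt_alphaInv x)).congr_deriv ?_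
  simp only [Qt]
  ring

theorem deriv_Vpot : deriv Vpot = fun x => 2 * Qt x ^ 3 * Ht x * (3 * Qt x - 2) := by
  ext x
  refine HasDerivAt.deriv ?_
  have hQ := hasDerivAt_Qt x
  exact (((hQ.fun_pow 2).const_mul 2).mul (hQ.const_sub 1)).congr_deriv (by ring)

theorem deriv_deriv_Vpot (x : ℝ) :
    deriv (deriv Vpot) x = 2 / 3 * Qt x ^ 4 * (27 * Qt x ^ 2 - 50 * Qt x + 18) := by
  rw [deriv_Vpot]
  have hQ := hasDerivAt_Qt x
  refine HasDerivAt.deriv ?_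
  refine ((((hQ.fun_pow 3).const_mul 2).fun_mul (hasDerivAt_Ht x)).fun_mul
    ((hQ.const_mul 3).sub_const 2)).congr_deriv ?_
  linear_combination (-24 * Qt x ^ 5 + 12 * Qt x ^ 4) * Ht_sq x

theorem Qt_zero : Qt 0 = 3 / 2 := by
  rw [Qt, alphaInv_zero, Qs_eq, cosh_zero]
  norm_num

theorem Qs_strictAntiOn : StrictAntiOn Qs (Ici 0) := fun a ha b hb hab => by
  rw [Qs_eq, Qs_eq]
  gcongr
  exact cosh_strictMonoOn ha hb hab

theorem Qt_strictAntiOn : StrictAntiOn Qt (Ici 0) :=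
  Qs_strictAntiOn.comp_strictMonoOn (alphaInv_strictMono.strictMonoOn _)
    fun _ hx => alphaInv_zero ▸ alphaInv_strictMono.monotone hx

-- From `Qs y = 3 / (cosh y + 1)`: the point of `[0, ∞)` where `Qt` takes the value `q ∈ (0, 3/2]`.
noncomputable def QtInv (q : ℝ) : ℝ := alphaFn (arcosh (3 / q - 1))

section QtInv

variable {x p q : ℝ}

theorem one_le_three_div_sub_one (hq : q ∈ Ioc 0 (3 / 2)) : 1 ≤ 3 / q - 1 := by
  rw [le_sub_iff_add_le, le_div_iff₀ hq.1]
  linarith [hq.2]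

theorem QtInv_nonneg (hq : q ∈ Ioc 0 (3 / 2)) : 0 ≤ QtInv q :=
  alphaFn_zero ▸ alphaFn_strictMono.monotone (arcosh_nonneg (one_le_three_div_sub_one hq))

theorem Qt_QtInv (hq : q ∈ Ioc 0 (3 / 2)) : Qt (QtInv q) = q := by
  rw [Qt, QtInv, alphaInv_alphaFn, Qs_eq, cosh_arcosh (one_le_three_div_sub_one hq),
    sub_add_cancel, div_div_cancel₀ three_ne_zero]

theorem Qt_eq_iff (hx : 0 ≤ x) (hq : q ∈ Ioc 0 (3 / 2)) : Qt x = q ↔ x = QtInv q := by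
  conv_lhs => rw [← Qt_QtInv hq]
  exact Qt_strictAntiOn.injOn.eq_iff hx (QtInv_nonneg hq)

theorem le_Qt_iff (hx : 0 ≤ x) (hq : q ∈ Ioc 0 (3 / 2)) : q ≤ Qt x ↔ x ≤ QtInv q := by
  conv_lhs => rw [← Qt_QtInv hq]
  exact Qt_strictAntiOn.le_iff_ge (QtInv_nonneg hq) hx

theorem lt_Qt_iff (hx : 0 ≤ x) (hq : q ∈ Ioc 0 (3 / 2)) : q < Qt x ↔ x < QtInv q := by
  conv_lhs => rw [← Qt_QtInv hq]
  exact Qt_strictAntiOn.lt_iff_gt (QtInv_nonneg hq) hx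

theorem Qt_le_of_QtInv_le (hq : q ∈ Ioc 0 (3 / 2)) (h : QtInv q ≤ x) : Qt x ≤ q :=
  not_lt.1 fun hlt => (lt_Qt_iff ((QtInv_nonneg hq).trans h) hq).1 hlt |>.not_ge h

theorem QtInv_pos (hq : q ∈ Ioo 0 (3 / 2)) : 0 < QtInv q :=
  (lt_Qt_iff le_rfl (Ioo_subset_Ioc_self hq)).1 (Qt_zero ▸ hq.2)

theorem QtInv_lt_QtInv (hp : p ∈ Ioc 0 (3 / 2)) (hq : q ∈ Ioc 0 (3 / 2)) (hpq : p < q) :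
    QtInv q < QtInv p :=
  (lt_Qt_iff (QtInv_nonneg hq) hp).1 (by rwa [Qt_QtInv hq])

end QtInv

theorem Vpot_eq_zero_iff (x : ℝ) : Vpot x = 0 ↔ Qt x = 1 := by
  simp [Vpot, (Qt_pos x).ne', sub_eq_zero, eq_comm (a := (1 : ℝ))]

theorem Vpot_nonpos {x : ℝ} (h : 1 ≤ Qt x) : Vpot x ≤ 0 :=
  mul_nonpos_of_nonneg_of_nonpos (by positivity) (by linarith)

theorem Vpot_nonneg {x : ℝ} (h : Qt x ≤ 1) : 0 ≤ Vpot x :=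
  mul_nonneg (by positivity) (by linarith)

theorem deriv_Vpot_eq_zero_iff {x : ℝ} (hx : 0 < x) : deriv Vpot x = 0 ↔ Qt x = 2 / 3 := by
  have : 3 * Qt x - 2 = 0 ↔ Qt x = 2 / 3 := by constructor <;> intro h <;> linarith
  simp [deriv_Vpot, (Qt_pos x).ne', (Ht_pos hx).ne', this]

theorem deriv_Vpot_nonneg {x : ℝ} (hx : 0 ≤ x) (h : 2 / 3 ≤ Qt x) : 0 ≤ deriv Vpot x := by
  have hQ := Qt_pos x
  have hH := Ht_nonneg hx
  rw [deriv_Vpot]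
  exact mul_nonneg (by positivity) (by linarith)

theorem deriv_Vpot_nonpos {x : ℝ} (hx : 0 ≤ x) (h : Qt x ≤ 2 / 3) : deriv Vpot x ≤ 0 := by
  have hQ := Qt_pos x
  have hH := Ht_nonneg hx
  rw [deriv_Vpot]
  exact mul_nonpos_of_nonneg_of_nonpos (by positivity) (by linarith)

-- The roots of `27 q² - 50 q + 18`.
noncomputable def qLow : ℝ := (25 - √139) / 27

noncomputable def qHigh : ℝ := (25 + √139) / 27

theorem qLow_qHigh_bounds : 0 < qLow ∧ qLow < 2 / 3 ∧ 1 < qHigh ∧ qHigh < 3 / 2 := by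
  have h7 : 7 < √139 := by rw [Real.lt_sqrt] <;> norm_num
  have h13 : √139 < 13 := by rw [Real.sqrt_lt'] <;> norm_num
  refine ⟨?_, ?_, ?_, ?_⟩ <;> simp only [qLow, qHigh] <;> linarith

theorem deriv_deriv_Vpot_eq (x : ℝ) :
    deriv (deriv Vpot) x = 18 * Qt x ^ 4 * ((Qt x - qLow) * (Qt x - qHigh)) := by
  have : √139 ^ 2 = 139 := Real.sq_sqrt (by norm_num)
  rw [deriv_deriv_Vpot, qLow, qHigh]
  linear_combination (2 / 81 * Qt x ^ 4) * this

theorem deriv_deriv_Vpot_eq_zero_iff (x : ℝ) :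
    deriv (deriv Vpot) x = 0 ↔ Qt x = qLow ∨ Qt x = qHigh := by
  simp [deriv_deriv_Vpot_eq, (Qt_pos x).ne', sub_eq_zero]

theorem deriv_deriv_Vpot_nonneg_of_le_qLow {x : ℝ} (h : Qt x ≤ qLow) :
    0 ≤ deriv (deriv Vpot) x := by
  have := qLow_qHigh_bounds
  rw [deriv_deriv_Vpot_eq]
  exact mul_nonneg (by positivity) (mul_nonneg_of_nonpos_of_nonpos (by linarith) (by linarith))

theorem deriv_deriv_Vpot_nonpos {x : ℝ} (h₁ : qLow ≤ Qt x) (h₂ : Qt x ≤ qHigh) :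
    deriv (deriv Vpot) x ≤ 0 := by
  rw [deriv_deriv_Vpot_eq]
  exact mul_nonpos_of_nonneg_of_nonpos (by positivity)
    (mul_nonpos_of_nonneg_of_nonpos (by linarith) (by linarith))

theorem deriv_deriv_Vpot_nonneg_of_qHigh_le {x : ℝ} (h : qHigh ≤ Qt x) :
    0 ≤ deriv (deriv Vpot) x := by
  have := qLow_qHigh_bounds
  rw [deriv_deriv_Vpot_eq]
  exact mul_nonneg (by positivity) (mul_nonneg (by linarith) (by linarith))

/-- Structure of the zeros of `V`, `V'`, `V''` on `(0,∞)` and the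
resulting sign pattern. -/
theorem potential_roots_and_signs :
    ∃ x0 x1 x21 x22 : ℝ,
      0 < x21 ∧ x21 < x0 ∧ x0 < x1 ∧ x1 < x22 ∧
      (∀ x ∈ Set.Ioi (0:ℝ), (Vpot x = 0 ↔ x = x0)) ∧
      (∀ x ∈ Set.Ioi (0:ℝ), (deriv Vpot x = 0 ↔ x = x1)) ∧
      (∀ x ∈ Set.Ioi (0:ℝ), (deriv (deriv Vpot) x = 0 ↔ x = x21 ∨ x = x22)) ∧
      (∀ x : ℝ, 0 ≤ x → x ≤ x0 → Vpot x ≤ 0) ∧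
      (∀ x : ℝ, x0 ≤ x → 0 ≤ Vpot x) ∧
      (∀ x : ℝ, 0 ≤ x → x ≤ x1 → 0 ≤ deriv Vpot x) ∧
      (∀ x : ℝ, x1 ≤ x → deriv Vpot x ≤ 0) ∧
      (∀ x : ℝ, 0 ≤ x → x ≤ x21 → 0 ≤ deriv (deriv Vpot) x) ∧
      (∀ x : ℝ, x21 ≤ x → x ≤ x22 → deriv (deriv Vpot) x ≤ 0) ∧
      (∀ x : ℝ, x22 ≤ x → 0 ≤ deriv (deriv Vpot) x) := by
  obtain ⟨hLow₀, hLow, hHigh₁, hHigh⟩ := qLow_qHigh_bounds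
  have h1 : (1 : ℝ) ∈ Ioc 0 (3 / 2) := by norm_num
  have h23 : (2 / 3 : ℝ) ∈ Ioc 0 (3 / 2) := by norm_num
  have hL : qLow ∈ Ioc 0 (3 / 2) := ⟨hLow₀, by linarith⟩
  have hH : qHigh ∈ Ioc 0 (3 / 2) := ⟨by linarith, hHigh.le⟩
  refine ⟨QtInv 1, QtInv (2 / 3), QtInv qHigh, QtInv qLow, QtInv_pos ⟨by linarith, hHigh⟩,
    QtInv_lt_QtInv h1 hH hHigh₁, QtInv_lt_QtInv h23 h1 (by norm_num),
    QtInv_lt_QtInv hL h23 hLow, fun x hx => ?_, fun x hx => ?_, fun x hx => ?_,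
    fun x hx h => Vpot_nonpos ((le_Qt_iff hx h1).2 h),
    fun x h => Vpot_nonneg (Qt_le_of_QtInv_le h1 h),
    fun x hx h => deriv_Vpot_nonneg hx ((le_Qt_iff hx h23).2 h),
    fun x h => deriv_Vpot_nonpos ((QtInv_nonneg h23).trans h) (Qt_le_of_QtInv_le h23 h),
    fun x hx h => deriv_deriv_Vpot_nonneg_of_qHigh_le ((le_Qt_iff hx hH).2 h),
    fun x h h' => deriv_deriv_Vpot_nonpos ((le_Qt_iff ((QtInv_nonneg hH).trans h) hL).2 h')
      (Qt_le_of_QtInv_le hH h),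
    fun x h => deriv_deriv_Vpot_nonneg_of_le_qLow (Qt_le_of_QtInv_le hL h)⟩
  · rw [Vpot_eq_zero_iff, Qt_eq_iff (le_of_lt hx) h1]
  · rw [deriv_Vpot_eq_zero_iff hx, Qt_eq_iff (le_of_lt hx) h23]
  · rw [deriv_deriv_Vpot_eq_zero_iff, Qt_eq_iff (le_of_lt hx) hL, Qt_eq_iff (le_of_lt hx) hH,
      or_comm]
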